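/- Under sequential ignorability with no missing data, the mediation formula holds for finite-valued variables: E[Y(t, M(t'))] = Σ_x Σ_m E[Y | M=m, T=t, X=x] · P(M=m | T=t', X=x) · P(X=x), where Y(t, M(t')) is the nested potential outcome. -/
import Mathlib


open Finset
open scoped Classical

/-- The probability of the event `A` under the probability mass function `p`. -/
noncomputable def pr {Ω : Type*} [Fintype Ω] (p : Ω → ℝ) (A : Ω → Prop) : ℝ :=
  ∑ ω, if A ω then p ω else 0

section Aux
variable {Ω : Type*} [Fintype Ω]

theorem pr_congr (p : Ω → ℝ) {A B : Ω → Prop} (h : ∀ ω, A ω ↔ B ω) :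
    pr p A = pr p B := by
  unfold pr
  exact Finset.sum_congr rfl fun ω _ => if_congr (h ω) rfl rfl

theorem ws_congr (p : Ω → ℝ) (Y : Ω → ℝ) {A B : Ω → Prop} [DecidablePred A]
    [DecidablePred B] (h : ∀ ω, A ω ↔ B ω) :
    (∑ ω, if A ω then p ω * Y ω else 0) = ∑ ω, if B ω then p ω * Y ω else 0 :=
  Finset.sum_congr rfl fun ω _ => if_congr (h ω) rfl rfl

theorem pr_pos_mono (p : Ω → ℝ) (hp0 : ∀ ω, 0 ≤ p ω) {A B : Ω → Prop}
    (h : ∀ ω, A ω → B ω) (hA : 0 < pr p A) : 0 < pr p B := by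
  refine lt_of_lt_of_le hA ?_
  unfold pr
  refine Finset.sum_le_sum fun ω _ => ?_
  by_cases hA' : A ω
  · rw [if_pos hA', if_pos (h ω hA')]
  · rw [if_neg hA']
    split_ifs
    exacts [hp0 ω, le_refl 0]

theorem wsum_eq (p : Ω → ℝ) (Y : Ω → ℝ) (A : Ω → Prop) [DecidablePred A] :
    (∑ ω, if A ω then p ω * Y ω else 0)
      = ∑ v ∈ Finset.univ.image Y, v * pr p (fun ω => A ω ∧ Y ω = v) := by
  symm
  calc ∑ v ∈ Finset.univ.image Y, v * pr p (fun ω => A ω ∧ Y ω = v)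
      = ∑ v ∈ Finset.univ.image Y, ∑ ω, (if A ω ∧ Y ω = v then v * p ω else 0) := by
        refine Finset.sum_congr rfl fun v _ => ?_
        rw [pr, Finset.mul_sum]
        refine Finset.sum_congr rfl fun ω _ => ?_
        by_cases h : A ω ∧ Y ω = v
        · rw [if_pos h, if_pos h]
        · rw [if_neg h, if_neg h]; ring
    _ = ∑ ω, ∑ v ∈ Finset.univ.image Y, (if A ω ∧ Y ω = v then v * p ω else 0) :=
        Finset.sum_comm
    _ = ∑ ω, if A ω then p ω * Y ω else 0 := by
        refine Finset.sum_congr rfl fun ω _ => ?_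
        by_cases hA : A ω
        · rw [if_pos hA, Finset.sum_eq_single (Y ω)]
          · rw [if_pos ⟨hA, rfl⟩]; ring
          · intro b _ hb; rw [if_neg]; rintro ⟨-, hY⟩; exact hb hY.symm
          · intro hmem; exact absurd (Finset.mem_image_of_mem Y (Finset.mem_univ ω)) hmem
        · rw [if_neg hA]
          refine Finset.sum_eq_zero fun v _ => ?_
          rw [if_neg]; rintro ⟨h1, -⟩; exact hA h1

theorem weighted_of_pointwise (p Y : Ω → ℝ) (A B : Ω → Prop) [DecidablePred A]
    [DecidablePred B] (c d : ℝ)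
    (h : ∀ v, c * pr p (fun ω => A ω ∧ Y ω = v) = pr p (fun ω => B ω ∧ Y ω = v) * d) :
    c * (∑ ω, if A ω then p ω * Y ω else 0) = (∑ ω, if B ω then p ω * Y ω else 0) * d := by
  rw [wsum_eq p Y A, wsum_eq p Y B, Finset.mul_sum, Finset.sum_mul]
  exact Finset.sum_congr rfl fun v _ => by linear_combination v * h v

theorem wsum_fiber {𝓜 : Type*} [Fintype 𝓜] (p Y : Ω → ℝ) (A : Ω → Prop)
    [DecidablePred A] (f : Ω → 𝓜) :
    (∑ m, ∑ ω, (if A ω ∧ f ω = m then p ω * Y ω else 0))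
      = ∑ ω, if A ω then p ω * Y ω else 0 := by
  rw [Finset.sum_comm]
  refine Finset.sum_congr rfl fun ω _ => ?_
  by_cases hA : A ω
  · rw [if_pos hA, Finset.sum_eq_single (f ω)]
    · rw [if_pos ⟨hA, rfl⟩]
    · intro b _ hb; rw [if_neg]; rintro ⟨-, hY⟩; exact hb hY.symm
    · intro hmem; exact absurd (Finset.mem_univ (f ω)) hmem
  · rw [if_neg hA]
    refine Finset.sum_eq_zero fun v _ => ?_
    rw [if_neg]; rintro ⟨h1, -⟩; exact hA h1

theorem sum_fiber2 {𝓧 𝓜 : Type*} [Fintype 𝓧] [Fintype 𝓜]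
    (X : Ω → 𝓧) (f : Ω → 𝓜) (F : 𝓧 → 𝓜 → Ω → ℝ) :
    (∑ x, ∑ m, ∑ ω, (if X ω = x ∧ f ω = m then F x m ω else 0))
      = ∑ ω, F (X ω) (f ω) ω := by
  calc (∑ x, ∑ m, ∑ ω, (if X ω = x ∧ f ω = m then F x m ω else 0))
      = ∑ x, ∑ ω, ∑ m, (if X ω = x ∧ f ω = m then F x m ω else 0) :=
        Finset.sum_congr rfl fun x _ => Finset.sum_comm
    _ = ∑ ω, ∑ x, ∑ m, (if X ω = x ∧ f ω = m then F x m ω else 0) := Finset.sum_comm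
    _ = ∑ ω, F (X ω) (f ω) ω := by
        refine Finset.sum_congr rfl fun ω _ => ?_
        calc (∑ x, ∑ m, (if X ω = x ∧ f ω = m then F x m ω else 0))
            = ∑ x, (if X ω = x then F x (f ω) ω else 0) := by
              refine Finset.sum_congr rfl fun x _ => ?_
              by_cases h : X ω = x
              · rw [if_pos h, Finset.sum_eq_single (f ω)]
                · rw [if_pos ⟨h, rfl⟩]
                · intro b _ hb; rw [if_neg]; rintro ⟨-, hY⟩; exact hb hY.symm
                · intro hmem; exact absurd (Finset.mem_univ (f ω)) hmem
              · rw [if_neg h]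
                refine Finset.sum_eq_zero fun v _ => ?_
                rw [if_neg]; rintro ⟨h1, -⟩; exact h h1
          _ = F (X ω) (f ω) ω := by
              rw [Finset.sum_eq_single (X ω)]
              · rw [if_pos rfl]
              · intro b _ hb; rw [if_neg]; exact fun hc => hb hc.symm
              · intro hmem; exact absurd (Finset.mem_univ (X ω)) hmem

theorem mediation_algebra (WA W2 W1 Wt Wt' WX Px Dt Dt' Q1 Q2 : ℝ)
    (F1 : Px * W2 = WA * Dt') (F2 : Dt' * W2 = Wt' * Q2) (F3 : Dt * W1 = Wt * Q1)
    (F4 : Px * Wt = WX * Dt) (F5 : Px * Wt' = WX * Dt')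
    (hPx : Px ≠ 0) (hDt : Dt ≠ 0) (hDt' : Dt' ≠ 0) (hQ1 : Q1 ≠ 0) :
    WA = W1 / Q1 * (Q2 / Dt') * Px := by
  have key : (Dt * Px * Dt') * (WA * Q1 * Dt') = (Dt * Px * Dt') * (W1 * Q2 * Px) := by
    linear_combination (-(Q1 * Dt' * Px * Dt)) * F1 + Q1 * Px ^ 2 * Dt * F2
      - Q2 * Px ^ 2 * Dt' * F3 - Q2 * Px * Q1 * Dt' * F4 + Q2 * Px * Dt * Q1 * F5
  have key2 := mul_left_cancel₀ (mul_ne_zero (mul_ne_zero hDt hPx) hDt') key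
  field_simp
  linear_combination key2

end Aux

/-- The mediation formula under sequential ignorability (finite, no missing
data):  `E[Y(t, M(t'))] = ∑_x ∑_m E[Y | M=m, T=t, X=x] · P(M=m | T=t', X=x) ·
P(X=x)`, where `M = M(T)` and `Y = Y(T, M(T))` are the observed variables. -/
theorem mediation_formula
    {Ω 𝓜 𝓧 : Type*} [Fintype Ω] [Fintype 𝓜] [Fintype 𝓧]
    (p : Ω → ℝ) (hp0 : ∀ ω, 0 ≤ p ω) (hp1 : ∑ ω, p ω = 1)
    (T : Ω → Bool) (X : Ω → 𝓧)
    (Mpo : Bool → Ω → 𝓜) (Ypo : Bool → 𝓜 → Ω → ℝ)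
    -- sequential ignorability, part 1:  (Y(t,m), M(t')) ⊥ T | X
    (hSI1 : ∀ (t t' tt : Bool) (m m' : 𝓜) (v : ℝ) (x : 𝓧),
      pr p (fun ω => X ω = x) *
          pr p (fun ω => X ω = x ∧ Ypo t m ω = v ∧ Mpo t' ω = m' ∧ T ω = tt) =
        pr p (fun ω => X ω = x ∧ Ypo t m ω = v ∧ Mpo t' ω = m') *
          pr p (fun ω => X ω = x ∧ T ω = tt))
    -- sequential ignorability, part 2:  Y(t,m) ⊥ M(t') | (T, X)
    (hSI2 : ∀ (t t' tt : Bool) (m m' : 𝓜) (v : ℝ) (x : 𝓧),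
      pr p (fun ω => T ω = tt ∧ X ω = x) *
          pr p (fun ω => T ω = tt ∧ X ω = x ∧ Ypo t m ω = v ∧ Mpo t' ω = m') =
        pr p (fun ω => T ω = tt ∧ X ω = x ∧ Ypo t m ω = v) *
          pr p (fun ω => T ω = tt ∧ X ω = x ∧ Mpo t' ω = m'))
    -- positivity of all conditioning events
    (hposTX : ∀ (tt : Bool) (x : 𝓧), 0 < pr p (fun ω => T ω = tt ∧ X ω = x))
    (hposMTX : ∀ (m : 𝓜) (tt : Bool) (x : 𝓧),
      0 < pr p (fun ω => Mpo (T ω) ω = m ∧ T ω = tt ∧ X ω = x)) :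
    ∀ t t' : Bool,
      -- E[Y(t, M(t'))]
      (∑ ω, p ω * Ypo t (Mpo t' ω) ω) =
        ∑ x, ∑ m,
          -- E[Y | M=m, T=t, X=x]
          ((∑ ω, if Mpo (T ω) ω = m ∧ T ω = t ∧ X ω = x then
              p ω * Ypo (T ω) (Mpo (T ω) ω) ω else 0) /
            pr p (fun ω => Mpo (T ω) ω = m ∧ T ω = t ∧ X ω = x)) *
          -- P(M=m | T=t', X=x)
          (pr p (fun ω => Mpo (T ω) ω = m ∧ T ω = t' ∧ X ω = x) /
            pr p (fun ω => T ω = t' ∧ X ω = x)) *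
          -- P(X=x)
          pr p (fun ω => X ω = x) := by
  intro t t'
  have hL : (∑ ω, p ω * Ypo t (Mpo t' ω) ω)
      = ∑ x, ∑ m, ∑ ω, (if X ω = x ∧ Mpo t' ω = m then p ω * Ypo t m ω else 0) :=
    (sum_fiber2 X (Mpo t') fun _ m ω => p ω * Ypo t m ω).symm
  rw [hL]
  refine Finset.sum_congr rfl fun x _ => Finset.sum_congr rfl fun m _ => ?_
  -- consistency rewrites of the observed quantities
  have hN : (∑ ω, if Mpo (T ω) ω = m ∧ T ω = t ∧ X ω = x then
        p ω * Ypo (T ω) (Mpo (T ω) ω) ω else 0)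
      = ∑ ω, if (T ω = t ∧ X ω = x) ∧ Mpo t ω = m then p ω * Ypo t m ω else 0 := by
    refine Finset.sum_congr rfl fun ω _ => ?_
    by_cases h : T ω = t
    · by_cases hm : Mpo t ω = m
      · by_cases hx : X ω = x
        · rw [if_pos ⟨by rw [h]; exact hm, h, hx⟩, if_pos ⟨⟨h, hx⟩, hm⟩, h, hm]
        · rw [if_neg (fun hc => hx hc.2.2), if_neg (fun hc => hx hc.1.2)]
      · rw [if_neg, if_neg (fun hc => hm hc.2)]
        rintro ⟨h1, -, -⟩
        exact hm (by rw [← h]; exact h1)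
    · rw [if_neg (fun hc => h hc.2.1), if_neg (fun hc => h hc.1.1)]
  have hQ : ∀ tq : Bool, pr p (fun ω => Mpo (T ω) ω = m ∧ T ω = tq ∧ X ω = x)
      = pr p (fun ω => (T ω = tq ∧ X ω = x) ∧ Mpo tq ω = m) := by
    intro tq
    refine pr_congr p fun ω => ?_
    constructor
    · rintro ⟨hm, ht, hx⟩; exact ⟨⟨ht, hx⟩, by rw [← ht]; exact hm⟩
    · rintro ⟨⟨ht, hx⟩, hm⟩; exact ⟨by rw [ht]; exact hm, ht, hx⟩
  -- weighted sequential-ignorability facts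
  have F1 : pr p (fun ω => X ω = x) *
        (∑ ω, if (T ω = t' ∧ X ω = x) ∧ Mpo t' ω = m then p ω * Ypo t m ω else 0)
      = (∑ ω, if X ω = x ∧ Mpo t' ω = m then p ω * Ypo t m ω else 0) *
        pr p (fun ω => T ω = t' ∧ X ω = x) := by
    refine weighted_of_pointwise p (Ypo t m) _ _ _ _ fun v => ?_
    have e1 : pr p (fun ω => ((T ω = t' ∧ X ω = x) ∧ Mpo t' ω = m) ∧ Ypo t m ω = v)
        = pr p (fun ω => X ω = x ∧ Ypo t m ω = v ∧ Mpo t' ω = m ∧ T ω = t') :=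
      pr_congr p fun ω => by tauto
    have e2 : pr p (fun ω => X ω = x ∧ Ypo t m ω = v ∧ Mpo t' ω = m)
        = pr p (fun ω => (X ω = x ∧ Mpo t' ω = m) ∧ Ypo t m ω = v) :=
      pr_congr p fun ω => by tauto
    have e3 : pr p (fun ω => X ω = x ∧ T ω = t')
        = pr p (fun ω => T ω = t' ∧ X ω = x) :=
      pr_congr p fun ω => by tauto
    rw [e1, ← e2, ← e3]
    exact hSI1 t t' t' m m v x
  have F23 : ∀ tq : Bool, pr p (fun ω => T ω = tq ∧ X ω = x) *
        (∑ ω, if (T ω = tq ∧ X ω = x) ∧ Mpo tq ω = m then p ω * Ypo t m ω else 0)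
      = (∑ ω, if T ω = tq ∧ X ω = x then p ω * Ypo t m ω else 0) *
        pr p (fun ω => (T ω = tq ∧ X ω = x) ∧ Mpo tq ω = m) := by
    intro tq
    refine weighted_of_pointwise p (Ypo t m) _ _ _ _ fun v => ?_
    have e1 : pr p (fun ω => ((T ω = tq ∧ X ω = x) ∧ Mpo tq ω = m) ∧ Ypo t m ω = v)
        = pr p (fun ω => T ω = tq ∧ X ω = x ∧ Ypo t m ω = v ∧ Mpo tq ω = m) :=
      pr_congr p fun ω => by tauto
    have e2 : pr p (fun ω => (T ω = tq ∧ X ω = x) ∧ Ypo t m ω = v)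
        = pr p (fun ω => T ω = tq ∧ X ω = x ∧ Ypo t m ω = v) :=
      pr_congr p fun ω => by tauto
    have e3 : pr p (fun ω => (T ω = tq ∧ X ω = x) ∧ Mpo tq ω = m)
        = pr p (fun ω => T ω = tq ∧ X ω = x ∧ Mpo tq ω = m) :=
      pr_congr p fun ω => by tauto
    rw [e1, e2, e3]
    exact hSI2 t tq tq m m v x
  have F45 : ∀ tq : Bool, pr p (fun ω => X ω = x) *
        (∑ ω, if T ω = tq ∧ X ω = x then p ω * Ypo t m ω else 0)
      = (∑ ω, if X ω = x then p ω * Ypo t m ω else 0) *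
        pr p (fun ω => T ω = tq ∧ X ω = x) := by
    intro tq
    have hper : ∀ m' : 𝓜, pr p (fun ω => X ω = x) *
          (∑ ω, if (T ω = tq ∧ X ω = x) ∧ Mpo t ω = m' then p ω * Ypo t m ω else 0)
        = (∑ ω, if X ω = x ∧ Mpo t ω = m' then p ω * Ypo t m ω else 0) *
          pr p (fun ω => T ω = tq ∧ X ω = x) := by
      intro m'
      refine weighted_of_pointwise p (Ypo t m) _ _ _ _ fun v => ?_
      have e1 : pr p (fun ω => ((T ω = tq ∧ X ω = x) ∧ Mpo t ω = m') ∧ Ypo t m ω = v)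
          = pr p (fun ω => X ω = x ∧ Ypo t m ω = v ∧ Mpo t ω = m' ∧ T ω = tq) :=
        pr_congr p fun ω => by tauto
      have e2 : pr p (fun ω => X ω = x ∧ Ypo t m ω = v ∧ Mpo t ω = m')
          = pr p (fun ω => (X ω = x ∧ Mpo t ω = m') ∧ Ypo t m ω = v) :=
        pr_congr p fun ω => by tauto
      have e3 : pr p (fun ω => X ω = x ∧ T ω = tq)
          = pr p (fun ω => T ω = tq ∧ X ω = x) :=
        pr_congr p fun ω => by tauto
      rw [e1, ← e2, ← e3]
      exact hSI1 t t tq m m' v x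
    calc pr p (fun ω => X ω = x) *
          (∑ ω, if T ω = tq ∧ X ω = x then p ω * Ypo t m ω else 0)
        = pr p (fun ω => X ω = x) *
          ∑ m', ∑ ω, (if (T ω = tq ∧ X ω = x) ∧ Mpo t ω = m' then p ω * Ypo t m ω else 0) := by
          rw [wsum_fiber]
      _ = ∑ m', pr p (fun ω => X ω = x) *
            ∑ ω, (if (T ω = tq ∧ X ω = x) ∧ Mpo t ω = m' then p ω * Ypo t m ω else 0) := by
          rw [Finset.mul_sum]
      _ = ∑ m', (∑ ω, if X ω = x ∧ Mpo t ω = m' then p ω * Ypo t m ω else 0) *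
            pr p (fun ω => T ω = tq ∧ X ω = x) :=
          Finset.sum_congr rfl fun m' _ => hper m'
      _ = (∑ m', ∑ ω, (if X ω = x ∧ Mpo t ω = m' then p ω * Ypo t m ω else 0)) *
            pr p (fun ω => T ω = tq ∧ X ω = x) := (Finset.sum_mul _ _ _).symm
      _ = (∑ ω, if X ω = x then p ω * Ypo t m ω else 0) *
            pr p (fun ω => T ω = tq ∧ X ω = x) := by
          rw [wsum_fiber]
  -- positivity
  have hPxpos : 0 < pr p (fun ω => X ω = x) :=
    pr_pos_mono p hp0 (fun ω (h : T ω = t ∧ X ω = x) => h.2) (hposTX t x)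
  have hQ1pos : 0 < pr p (fun ω => (T ω = t ∧ X ω = x) ∧ Mpo t ω = m) := by
    have := hposMTX m t x
    rwa [hQ t] at this
  -- assemble
  rw [hN, hQ t, hQ t']
  exact mediation_algebra _ _ _ _ _ _ _ _ _ _ _ F1 (F23 t') (F23 t) (F45 t) (F45 t')
    (ne_of_gt hPxpos) (ne_of_gt (hposTX t x)) (ne_of_gt (hposTX t' x)) (ne_of_gt hQ1pos)
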